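/- With 𝐀 = [[A⁺, |A⁻|],[|A⁻|, A⁺]] and P = [[(I+D)/2, (I-D)/2],[(I-D)/2, (I+D)/2]] for D ∈ 𝓓_n with DAD = |A|, the matrix P is an involution (P = P⁻¹, P² = I), and P·𝓛_𝐀·P = [[𝓛_{|A|}, 0],[0, 𝓛_{|A|}]]; consequently P·exp(-t𝓛_𝐀)·P = diag(exp(-t𝓛_{|A|}), exp(-t𝓛_{|A|})) for all t. -/

import Mathlib

open Matrix Finset

/-- Entrywise positive part. -/
noncomputable def matPos {n : ℕ} (A : Matrix (Fin n) (Fin n) ℝ) : Matrix (Fin n) (Fin n) ℝ :=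
  fun i j => if 0 < A i j then A i j else 0

/-- Entrywise negative part. -/
noncomputable def matNeg {n : ℕ} (A : Matrix (Fin n) (Fin n) ℝ) : Matrix (Fin n) (Fin n) ℝ :=
  fun i j => if A i j < 0 then A i j else 0

/-- Entrywise absolute value. -/
def absM {m : Type*} (A : Matrix m m ℝ) : Matrix m m ℝ := fun i j => |A i j|

/-- Laplacian of a (nonnegative) matrix. -/
noncomputable def lap {m : Type*} [Fintype m] [DecidableEq m] (B : Matrix m m ℝ) :
    Matrix m m ℝ :=
  fun i j => if i = j then ∑ k ∈ Finset.univ.erase i, B i k else -B i j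

/-- Signed Laplacian. -/
noncomputable def signedLap {n : ℕ} (A : Matrix (Fin n) (Fin n) ℝ) : Matrix (Fin n) (Fin n) ℝ :=
  fun i j => if i = j then ∑ k ∈ Finset.univ.erase i, |A i k| else -A i j

/-- Diagonal matrix of row sums. -/
noncomputable def deltaM {n : ℕ} (M : Matrix (Fin n) (Fin n) ℝ) : Matrix (Fin n) (Fin n) ℝ :=
  Matrix.diagonal (fun i => ∑ j, M i j)


notation "mexp" => NormedSpace.exp

open Filter Topology

/-!
Write `D = diagonal d`. Since `D² = 1`, the blocks `(1 ± D)/2` of `P` are the complementary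
projections onto the `±1`-eigenspaces of `D`, which makes `P` an involution and gives, for
`D X D = X` and `D Y D = -Y`,
`P [[X, Y], [Y, X]] P = diag (X + Y, X + Y)`.
The block Laplacian is `[[X, Y], [Y, X]]` with `X = 𝓛_{A⁺} + Δ_{|A⁻|}` and `Y = -|A⁻|`, and
balance `D A D = |A|` says precisely that `D` fixes `A⁺` and negates `|A⁻|`. Finally
`X + Y = 𝓛_{A⁺} + 𝓛_{|A⁻|} = 𝓛_{|A|}`, and conjugation by an involution commutes with `exp`.
-/

theorem Matrix.fromBlocks_sandwich {m α : Type*} [Fintype m] [NonUnitalNonAssocRing α]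
    (p q X Y : Matrix m m α) :
    fromBlocks p q q p * fromBlocks X Y Y X * fromBlocks p q q p =
      fromBlocks (p * X * p + q * X * q + (p * Y * q + q * Y * p))
        (p * X * q + q * X * p + (p * Y * p + q * Y * q))
        (p * X * q + q * X * p + (p * Y * p + q * Y * q))
        (p * X * p + q * X * q + (p * Y * q + q * Y * p)) := by
  simp only [fromBlocks_multiply, add_mul]
  congr 1 <;> abel

theorem sandwich_add_sandwich_eq_half_add_conj {R : Type*} [Ring R] [Algebra ℝ R]
    (D X : R) :
    (2⁻¹ : ℝ) • (1 + D) * X * ((2⁻¹ : ℝ) • (1 + D)) +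
      (2⁻¹ : ℝ) • (1 - D) * X * ((2⁻¹ : ℝ) • (1 - D)) = (2⁻¹ : ℝ) • (X + D * X * D) := by
  simp only [smul_mul_assoc, mul_smul_comm, add_mul, mul_add, sub_mul, mul_sub, one_mul, mul_one,
    smul_smul, smul_sub, smul_add]
  module

theorem cross_sandwich_add_eq_half_sub_conj {R : Type*} [Ring R] [Algebra ℝ R]
    (D X : R) :
    (2⁻¹ : ℝ) • (1 + D) * X * ((2⁻¹ : ℝ) • (1 - D)) +
      (2⁻¹ : ℝ) • (1 - D) * X * ((2⁻¹ : ℝ) • (1 + D)) = (2⁻¹ : ℝ) • (X - D * X * D) := by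
  simp only [smul_mul_assoc, mul_smul_comm, add_mul, mul_add, sub_mul, mul_sub, one_mul, mul_one,
    smul_smul, smul_sub, smul_add]
  module

/-- The matrix `P` of the statement: the lift of the switching `D` to the double cover. -/
noncomputable def switchingLift {m : Type*} [DecidableEq m] (D : Matrix m m ℝ) :
    Matrix (m ⊕ m) (m ⊕ m) ℝ :=
  fromBlocks ((2⁻¹ : ℝ) • (1 + D)) ((2⁻¹ : ℝ) • (1 - D))
    ((2⁻¹ : ℝ) • (1 - D)) ((2⁻¹ : ℝ) • (1 + D))

section SwitchingLift

variable {m : Type*} [Fintype m] [DecidableEq m]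

theorem switchingLift_mul_fromBlocks_mul_switchingLift {D X Y : Matrix m m ℝ}
    (hX : D * X * D = X) (hY : D * Y * D = -Y) :
    switchingLift D * fromBlocks X Y Y X * switchingLift D = fromBlocks (X + Y) 0 0 (X + Y) := by
  rw [switchingLift, Matrix.fromBlocks_sandwich, sandwich_add_sandwich_eq_half_add_conj,
    sandwich_add_sandwich_eq_half_add_conj, cross_sandwich_add_eq_half_sub_conj,
    cross_sandwich_add_eq_half_sub_conj, hX, hY]
  congr 1 <;> module

theorem switchingLift_mul_self {D : Matrix m m ℝ} (hD : D * D = 1) :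
    switchingLift D * switchingLift D = 1 := by
  have h := switchingLift_mul_fromBlocks_mul_switchingLift (D := D) (X := 1) (Y := 0)
    (by rwa [mul_one]) (by rw [mul_zero, zero_mul, neg_zero])
  rwa [add_zero, fromBlocks_one, mul_one] at h

end SwitchingLift

section Laplacian

variable {m : Type*} [Fintype m] [DecidableEq m]

theorem lap_add (B C : Matrix m m ℝ) : lap (B + C) = lap B + lap C := by
  ext i j
  by_cases hij : i = j <;> simp [lap, hij, Finset.sum_add_distrib, add_comm]

theorem lap_eq_diagonal_sub {C : Matrix m m ℝ} (hC : ∀ i, C i i = 0) :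
    lap C = diagonal (fun i => ∑ k, C i k) - C := by
  ext i j
  by_cases hij : i = j
  · subst hij
    simp [lap, Finset.sum_erase_eq_sub (Finset.mem_univ _), hC]
  · simp [lap, hij]

theorem lap_fromBlocks (B C : Matrix m m ℝ) :
    lap (fromBlocks B C C B) =
      fromBlocks (lap B + diagonal (fun i => ∑ k, C i k)) (-C)
        (-C) (lap B + diagonal (fun i => ∑ k, C i k)) := by
  ext (i | i) (j | j)
  all_goals by_cases hij : i = j
  all_goals simp [lap, hij, Finset.sum_erase_eq_sub (Finset.mem_univ _), Fintype.sum_sum_type]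
  all_goals ring

theorem diagonal_mul_lap_mul_diagonal {d : m → ℝ} (hd : ∀ i, d i * d i = 1)
    {B : Matrix m m ℝ} (hB : diagonal d * B * diagonal d = B) :
    diagonal d * lap B * diagonal d = lap B := by
  ext i j
  have hBij := congrFun (congrFun hB i) j
  simp only [mul_diagonal, diagonal_mul] at hBij ⊢
  by_cases hij : i = j
  · subst hij
    simp only [lap, ↓reduceIte]
    linear_combination (∑ k ∈ univ.erase i, B i k) * hd i
  · simp only [lap, if_neg hij]
    linear_combination -hBij

end Laplacian

section DiagonalConj

variable {m : Type*} [Fintype m] [DecidableEq m] {d : m → ℝ}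

theorem diagonal_mul_diagonal_mul_diagonal_of_mul_self (hd : ∀ i, d i * d i = 1) (e : m → ℝ) :
    diagonal d * diagonal e * diagonal d = diagonal e := by
  simp only [diagonal_mul_diagonal]
  congr 1
  funext i
  linear_combination e i * hd i

theorem apply_self_eq_zero_of_diagonal_mul_mul_diagonal_eq_neg (hd : ∀ i, d i * d i = 1)
    {C : Matrix m m ℝ} (hC : diagonal d * C * diagonal d = -C) (i : m) : C i i = 0 := by
  have h := congrFun (congrFun hC i) i
  simp only [mul_diagonal, diagonal_mul, Matrix.neg_apply] at h
  linear_combination (h - C i i * hd i) / 2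

end DiagonalConj

section SignedParts

variable {n : ℕ} {A : Matrix (Fin n) (Fin n) ℝ} {d : Fin n → ℝ}

theorem matPos_add_absM_matNeg (A : Matrix (Fin n) (Fin n) ℝ) :
    matPos A + absM (matNeg A) = absM A := by
  ext i j
  rcases lt_trichotomy (A i j) 0 with h | h | h
  · simp [matPos, matNeg, absM, h, h.not_gt]
  · simp [matPos, matNeg, absM, h]
  · simp [matPos, matNeg, absM, h, h.not_gt, abs_of_pos h]

theorem mul_apply_mul_eq_abs (hbal : diagonal d * A * diagonal d = absM A) (i j : Fin n) :
    d i * A i j * d j = |A i j| := by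
  simpa [mul_diagonal, diagonal_mul, absM] using congrFun (congrFun hbal i) j

theorem diagonal_mul_matPos_mul_diagonal (hbal : diagonal d * A * diagonal d = absM A) :
    diagonal d * matPos A * diagonal d = matPos A := by
  ext i j
  have hij := mul_apply_mul_eq_abs hbal i j
  by_cases h : 0 < A i j
  · simpa [matPos, h, abs_of_pos h] using hij
  · simp [matPos, h]

theorem diagonal_mul_absM_matNeg_mul_diagonal (hbal : diagonal d * A * diagonal d = absM A) :
    diagonal d * absM (matNeg A) * diagonal d = -absM (matNeg A) := by
  ext i j
  have hij := mul_apply_mul_eq_abs hbal i j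
  by_cases h : A i j < 0
  · rw [abs_of_neg h] at hij
    simp only [mul_diagonal, diagonal_mul, Matrix.neg_apply, absM, matNeg, if_pos h, abs_of_neg h]
    linear_combination -hij
  · simp [absM, matNeg, h]

end SignedParts

section Exponential

variable {m n : Type*} [Fintype m] [DecidableEq m] [Fintype n] [DecidableEq n]

theorem Matrix.exp_fromBlocks_zero_zero (X : Matrix m m ℝ) (Y : Matrix n n ℝ) :
    mexp (fromBlocks X 0 0 Y) = fromBlocks (mexp X) 0 0 (mexp Y) := by
  let _ : NormedRing (Matrix m m ℝ) := Matrix.linftyOpNormedRing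
  let _ : NormedAlgebra ℝ (Matrix m m ℝ) := Matrix.linftyOpNormedAlgebra
  let _ : NormedAlgebra ℚ (Matrix m m ℝ) := .restrictScalars ℚ ℝ _
  let _ : NormedRing (Matrix n n ℝ) := Matrix.linftyOpNormedRing
  let _ : NormedAlgebra ℝ (Matrix n n ℝ) := Matrix.linftyOpNormedAlgebra
  let _ : NormedAlgebra ℚ (Matrix n n ℝ) := .restrictScalars ℚ ℝ _
  let _ : NormedRing (Matrix (m ⊕ n) (m ⊕ n) ℝ) := Matrix.linftyOpNormedRing
  let blockDiag : Matrix m m ℝ × Matrix n n ℝ →+* Matrix (m ⊕ n) (m ⊕ n) ℝ :=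
    { toFun := fun x => fromBlocks x.1 0 0 x.2
      map_one' := fromBlocks_one
      map_mul' := fun x y => by simp [fromBlocks_multiply]
      map_zero' := fromBlocks_zero
      map_add' := fun x y => by simp [fromBlocks_add] }
  have hcont : Continuous blockDiag :=
    continuous_fst.matrix_fromBlocks continuous_const continuous_const continuous_snd
  have h := (NormedSpace.map_exp blockDiag hcont (X, Y)).symm
  simp only [blockDiag, RingHom.coe_mk, MonoidHom.coe_mk, OneHom.coe_mk, Prod.fst_exp,
    Prod.snd_exp] at h
  exact h

theorem Matrix.mul_exp_mul_of_mul_self_eq_one {P : Matrix m m ℝ} (hP : P * P = 1)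
    (X : Matrix m m ℝ) : P * mexp X * P = mexp (P * X * P) := by
  have hinv : P⁻¹ = P := inv_eq_right_inv hP
  simpa only [hinv] using (exp_conj P X ⟨⟨P, P, hP, hP⟩, rfl⟩).symm

end Exponential

theorem stmt15_general {n : ℕ} (A : Matrix (Fin n) (Fin n) ℝ)
    (d : Fin n → ℝ) (hd : ∀ i, d i = 1 ∨ d i = -1)
    (hbal : Matrix.diagonal d * A * Matrix.diagonal d = absM A)
    (P : Matrix (Fin n ⊕ Fin n) (Fin n ⊕ Fin n) ℝ)
    (hP : P = Matrix.fromBlocks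
      ((2⁻¹ : ℝ) • (1 + Matrix.diagonal d)) ((2⁻¹ : ℝ) • (1 - Matrix.diagonal d))
      ((2⁻¹ : ℝ) • (1 - Matrix.diagonal d)) ((2⁻¹ : ℝ) • (1 + Matrix.diagonal d))) :
    P * P = 1 ∧
    P * lap (Matrix.fromBlocks (matPos A) (absM (matNeg A))
        (absM (matNeg A)) (matPos A)) * P =
      Matrix.fromBlocks (lap (absM A)) 0 0 (lap (absM A)) ∧
    ∀ t : ℝ,
      P * mexp (-t • lap (Matrix.fromBlocks (matPos A) (absM (matNeg A))
          (absM (matNeg A)) (matPos A))) * P =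
        Matrix.fromBlocks (mexp (-t • lap (absM A))) 0 0 (mexp (-t • lap (absM A))) := by
  have hdd : ∀ i, d i * d i = 1 := fun i => by rcases hd i with h | h <;> simp [h]
  have hpos := diagonal_mul_matPos_mul_diagonal hbal
  have hneg := diagonal_mul_absM_matNeg_mul_diagonal hbal
  have hX : diagonal d * (lap (matPos A) + diagonal fun i => ∑ k, absM (matNeg A) i k) *
      diagonal d = lap (matPos A) + diagonal fun i => ∑ k, absM (matNeg A) i k := by
    rw [mul_add, add_mul, diagonal_mul_lap_mul_diagonal hdd hpos,
      diagonal_mul_diagonal_mul_diagonal_of_mul_self hdd]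
  have hY : diagonal d * -absM (matNeg A) * diagonal d = -(-absM (matNeg A)) := by
    rw [mul_neg, neg_mul, hneg]
  have hXY : (lap (matPos A) + diagonal fun i => ∑ k, absM (matNeg A) i k) + -absM (matNeg A) =
      lap (absM A) := by
    rw [← matPos_add_absM_matNeg A, lap_add,
      lap_eq_diagonal_sub (apply_self_eq_zero_of_diagonal_mul_mul_diagonal_eq_neg hdd hneg)]
    abel
  have hPP : P * P = 1 := by
    rw [hP]
    exact switchingLift_mul_self (by rw [diagonal_mul_diagonal, funext hdd, diagonal_one])
  have hconj : P * lap (fromBlocks (matPos A) (absM (matNeg A)) (absM (matNeg A)) (matPos A)) *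
      P = fromBlocks (lap (absM A)) 0 0 (lap (absM A)) := by
    rw [hP, lap_fromBlocks, ← switchingLift, switchingLift_mul_fromBlocks_mul_switchingLift hX hY,
      hXY]
  refine ⟨hPP, hconj, fun t => ?_⟩
  rw [Matrix.mul_exp_mul_of_mul_self_eq_one hPP, mul_smul_comm, smul_mul_assoc, hconj,
    fromBlocks_smul, smul_zero, Matrix.exp_fromBlocks_zero_zero]

theorem stmt15 {n : ℕ} (A : Matrix (Fin n) (Fin n) ℝ) (hdiag : ∀ i, A i i = 0)
    (d : Fin n → ℝ) (hd : ∀ i, d i = 1 ∨ d i = -1)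
    (hbal : Matrix.diagonal d * A * Matrix.diagonal d = absM A)
    (P : Matrix (Fin n ⊕ Fin n) (Fin n ⊕ Fin n) ℝ)
    (hP : P = Matrix.fromBlocks
      ((2⁻¹ : ℝ) • (1 + Matrix.diagonal d)) ((2⁻¹ : ℝ) • (1 - Matrix.diagonal d))
      ((2⁻¹ : ℝ) • (1 - Matrix.diagonal d)) ((2⁻¹ : ℝ) • (1 + Matrix.diagonal d))) :
    P * P = 1 ∧
    P * lap (Matrix.fromBlocks (matPos A) (absM (matNeg A))
        (absM (matNeg A)) (matPos A)) * P =
      Matrix.fromBlocks (lap (absM A)) 0 0 (lap (absM A)) ∧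
    ∀ t : ℝ,
      P * mexp (-t • lap (Matrix.fromBlocks (matPos A) (absM (matNeg A))
          (absM (matNeg A)) (matPos A))) * P =
        Matrix.fromBlocks (mexp (-t • lap (absM A))) 0 0 (mexp (-t • lap (absM A))) :=
  stmt15_general A d hd hbal P hP
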